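/- arXiv:math/9908152 — 4 statements merged into one kernel-verified Lean document; each statement's English description precedes it below -/
import Mathlib

section
/- Let 0 < θ < 1/2 be a real number. There exists a constant C > 0, depending only on θ, with the following property: for every finite field F with q elements and every integer r ≥ 3 such that q^r ≥ C, if M = ⌈2·log₂ r / log₂ q⌉ + 1, then every positive integer n with n ≤ 1 + θ·r·log₂ q satisfies n ≤ I_M, where I_M is the number of monic irreducible polynomials of degree M in F[X]. -/
/-!
Let `E` be the extension of `F` of degree `M`, so `|E| = q ^ M`. An element of `E` whose
minimal polynomial has degree `M` is one of the `M` roots of a monic irreducible of degree `M`;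
any other element has degree `d ∣ M` with `d ≤ M / 2` and is a root of `X ^ q ^ d - X`, so
there are at most `∑_{d ≤ M/2} q ^ d ≤ 2 q ^ (M/2)` of them. Hence
`q ^ M ≤ M I_M + 2 q ^ (M/2)`.

On the other side `M - 1 = ⌈log_q r²⌉`, so `q ^ M ≥ q r²`, while
`M n ≤ (2 log r / log q + 2)(1 + r log q / 2) = O(r log r)`. Once `q ^ r ≥ 16 ^ 16` forces
`q ≥ 16` or `r ≥ 16`, this gives `2 M n ≤ q ^ M` and `4 q ^ (M/2) ≤ q ^ M`, so
`M n ≤ M I_M`.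
-/

open Polynomial Finset Real

theorem Nat.le_div_two_of_dvd_of_ne {d n : ℕ} (hn : 0 < n) (hd : d ∣ n) (hne : d ≠ n) :
    d ≤ n / 2 := by
  obtain ⟨k, rfl⟩ := hd
  have hk : 2 ≤ k := by
    rcases k with _ | _ | k
    · simp at hn
    · simp at hne
    · omega
  rw [Nat.le_div_iff_mul_le two_pos]
  exact Nat.mul_le_mul_left d hk

theorem Nat.sum_Icc_pow_le_two_mul_pow {q : ℕ} (hq : 2 ≤ q) (m : ℕ) :
    ∑ d ∈ Icc 1 m, q ^ d ≤ 2 * q ^ m := by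
  induction m with
  | zero => simp
  | succ m ih =>
    rw [sum_Icc_succ_top (by omega), pow_succ]
    nlinarith [Nat.mul_le_mul_left (q ^ m) hq]

theorem Nat.lt_or_lt_of_pow_self_lt_pow {a q r : ℕ} (h : a ^ a < q ^ r) : a < q ∨ a < r := by
  by_contra! ⟨hq, hr⟩
  rcases a.eq_zero_or_pos with rfl | ha
  · simp_all
  · exact h.not_ge ((Nat.pow_le_pow_left hq r).trans (Nat.pow_le_pow_right ha hr))

theorem Nat.four_mul_pow_div_two_le {q M : ℕ} (h : 16 ≤ q ^ M) : 4 * q ^ (M / 2) ≤ q ^ M := by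
  have hq : 0 < q := by
    rcases M.eq_zero_or_pos with rfl | hM
    · simp at h
    · exact Nat.pos_of_ne_zero fun hq ↦ by simp [hq, hM.ne'] at h
  have hhalf : 4 ≤ q ^ (M - M / 2) := by
    refine (Nat.pow_le_pow_iff_left two_ne_zero).1 ?_
    calc 4 ^ 2 ≤ q ^ M := h
      _ ≤ (q ^ (M - M / 2)) ^ 2 := by rw [← pow_mul]; exact Nat.pow_le_pow_right hq (by omega)
  calc 4 * q ^ (M / 2) ≤ q ^ (M - M / 2) * q ^ (M / 2) := Nat.mul_le_mul_right _ hhalf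
    _ = q ^ M := by rw [← pow_add, Nat.sub_add_cancel (Nat.div_le_self M 2)]

theorem Nat.pow_four_le_two_pow {n : ℕ} (hn : 16 ≤ n) : n ^ 4 ≤ 2 ^ n := by
  induction n, hn using Nat.le_induction with
  | base => norm_num
  | succ n hn ih =>
    have h2 : 16 * n ^ 2 ≤ n ^ 3 := by nlinarith
    have h3 : 16 * n ^ 3 ≤ n ^ 4 := by nlinarith
    calc (n + 1) ^ 4 ≤ 2 * n ^ 4 := by nlinarith
      _ ≤ 2 * 2 ^ n := Nat.mul_le_mul_left 2 ih
      _ = 2 ^ (n + 1) := by ring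

theorem Polynomial.finite_setOf_natDegree_le (R : Type*) [Semiring R] [Finite R] (n : ℕ) :
    {p : R[X] | p.natDegree ≤ n}.Finite := by
  refine Set.Finite.of_finite_image (f := fun p (i : Fin (n + 1)) ↦ p.coeff i) (Set.toFinite _) ?_
  intro p hp p' hp' h
  ext i
  rcases le_or_gt i n with hi | hi
  · exact congrFun h ⟨i, Nat.lt_succ_of_le hi⟩
  · rw [coeff_eq_zero_of_natDegree_lt (lt_of_le_of_lt hp hi),
      coeff_eq_zero_of_natDegree_lt (lt_of_le_of_lt hp' hi)]

theorem card_filter_pow_eq_self_le {K : Type*} [Field K] [Fintype K] [DecidableEq K] {N : ℕ}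
    (hN : 1 < N) : #{x : K | x ^ N = x} ≤ N := by
  refine (card_le_degree_of_subset_roots fun x hx ↦ ?_).trans_eq
    (FiniteField.X_pow_card_sub_X_natDegree_eq K hN)
  rw [mem_roots (FiniteField.X_pow_card_sub_X_ne_zero K hN), IsRoot, eval_sub, eval_pow, eval_X,
    sub_eq_zero]
  exact (mem_filter.1 hx).2

section Minpoly

open Module

variable {F E : Type*} [Field F] [Field E] [Algebra F E]

theorem card_filter_minpoly_eq_le [Fintype E] [DecidableEq F[X]] {f : F[X]} (hf : f ≠ 0) :
    #{α : E | minpoly F α = f} ≤ f.natDegree := by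
  rw [← natDegree_map (algebraMap F E)]
  refine card_le_degree_of_subset_roots fun α hα ↦ ?_
  rw [mem_roots (map_ne_zero hf), IsRoot, eval_map_algebraMap, ← (mem_filter.1 hα).2]
  exact minpoly.aeval F α

variable [Finite F] [FiniteDimensional F E]

theorem pow_natCard_pow_natDegree_minpoly (α : E) :
    α ^ Nat.card F ^ (minpoly F α).natDegree = α := by
  have hirr := minpoly.irreducible (IsIntegral.of_finite F α)
  have hdvd := hirr.natDegree_dvd_iff_dvd_X_pow_card_pow_sub_X.1 dvd_rfl
  simpa [sub_eq_zero] using aeval_eq_zero_of_dvd_aeval_eq_zero hdvd (minpoly.aeval F α)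

theorem natDegree_minpoly_eq_finrank_or_exists_pow_eq_self (α : E) :
    (minpoly F α).natDegree = finrank F E ∨
      ∃ d ∈ Icc 1 (finrank F E / 2), α ^ Nat.card F ^ d = α := by
  have hα := IsIntegral.of_finite F α
  refine or_iff_not_imp_left.2 fun hne ↦ ⟨_, mem_Icc.2 ⟨minpoly.natDegree_pos hα,
    Nat.le_div_two_of_dvd_of_ne finrank_pos (minpoly.degree_dvd hα) hne⟩,
    pow_natCard_pow_natDegree_minpoly α⟩

variable [Fintype E]

theorem card_le_card_filter_natDegree_minpoly_eq_add [DecidableEq E] :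
    Fintype.card E ≤ #{α : E | (minpoly F α).natDegree = finrank F E} +
      ∑ d ∈ Icc 1 (finrank F E / 2), Nat.card F ^ d := by
  set M := finrank F E
  calc Fintype.card E
      ≤ #(({α : E | (minpoly F α).natDegree = M} : Finset E) ∪
          (Icc 1 (M / 2)).biUnion fun d ↦ ({α : E | α ^ Nat.card F ^ d = α} : Finset E)) := by
        rw [← card_univ]
        refine card_le_card fun α _ ↦ ?_
        simp only [mem_union, mem_biUnion, mem_filter_univ]
        exact natDegree_minpoly_eq_finrank_or_exists_pow_eq_self (F := F) α
    _ ≤ _ := by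
        refine (card_union_le _ _).trans <| Nat.add_le_add_left (card_biUnion_le.trans <|
          sum_le_sum fun d hd ↦ card_filter_pow_eq_self_le ?_) _
        exact Nat.one_lt_pow (Nat.one_le_iff_ne_zero.1 (mem_Icc.1 hd).1) Finite.one_lt_card

theorem card_filter_natDegree_minpoly_eq_le (N : ℕ) :
    #{α : E | (minpoly F α).natDegree = N} ≤
      N * Nat.card {f : F[X] // f.Monic ∧ Irreducible f ∧ f.natDegree = N} := by
  classical
  set G : Finset E := {α : E | (minpoly F α).natDegree = N}
  have hG : ∀ f ∈ G.image (minpoly F), f.Monic ∧ Irreducible f ∧ f.natDegree = N := by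
    simp only [G, mem_image, mem_filter_univ]
    rintro _ ⟨α, hα, rfl⟩
    exact ⟨minpoly.monic (.of_finite F α), minpoly.irreducible (.of_finite F α), hα⟩
  refine (G.card_le_mul_card_image (f := minpoly F) N fun f hf ↦ ?_).trans
    (Nat.mul_le_mul_left N ?_)
  · calc #{α ∈ G | minpoly F α = f} ≤ #{α : E | minpoly F α = f} :=
          card_le_card fun α hα ↦ mem_filter.2 ⟨mem_univ α, (mem_filter.1 hα).2⟩
      _ ≤ N := (card_filter_minpoly_eq_le (hG f hf).1.ne_zero).trans_eq (hG f hf).2.2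
  · rw [← Set.ncard_coe_finset]
    exact Set.ncard_le_ncard hG <|
      (finite_setOf_natDegree_le F N).subset fun f hf ↦ hf.2.2.le

end Minpoly

theorem FiniteField.pow_le_mul_card_monic_irreducible_add (F : Type*) [Field F] [Finite F]
    {M : ℕ} (hM : M ≠ 0) :
    Nat.card F ^ M ≤ M * Nat.card {f : F[X] // f.Monic ∧ Irreducible f ∧ f.natDegree = M} +
      2 * Nat.card F ^ (M / 2) := by
  classical
  obtain ⟨p, _⟩ := CharP.exists F
  have : Fact p.Prime := ⟨CharP.char_is_prime F p⟩
  have : NeZero M := ⟨hM⟩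
  let E := Extension F p M
  have : Fintype E := .ofFinite E
  have hrank : Module.finrank F E = M := finrank_extension F p M
  calc Nat.card F ^ M = Fintype.card E := by rw [Fintype.card_eq_nat_card, natCard_extension]
    _ ≤ #{α : E | (minpoly F α).natDegree = M} + ∑ d ∈ Icc 1 (M / 2), Nat.card F ^ d := by
        simpa only [hrank] using card_le_card_filter_natDegree_minpoly_eq_add (F := F) (E := E)
    _ ≤ _ := add_le_add (card_filter_natDegree_minpoly_eq_le M)
        (Nat.sum_Icc_pow_le_two_mul_pow Finite.one_lt_card _)

theorem Real.mul_logb_two_natCast_le {n k a : ℕ} (h : n ^ k ≤ 2 ^ a) : k * logb 2 n ≤ a := by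
  rcases n.eq_zero_or_pos with rfl | hn
  · simp
  calc k * logb 2 n = logb 2 ((n : ℝ) ^ k) := (logb_pow 2 (n : ℝ) k).symm
    _ ≤ logb 2 ((2 : ℝ) ^ a) :=
        logb_le_logb_of_le one_lt_two (by positivity) (by exact_mod_cast h)
    _ = a := by simp [logb_pow]

theorem Real.logb_two_natCast_le_self (n : ℕ) : logb 2 n ≤ n := by
  simpa using mul_logb_two_natCast_le (k := 1) (by simpa using n.lt_two_pow_self.le)

theorem Real.four_mul_logb_two_natCast_le {n : ℕ} (hn : 16 ≤ n) : 4 * logb 2 n ≤ n := by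
  exact_mod_cast mul_logb_two_natCast_le (Nat.pow_four_le_two_pow hn)

theorem Real.natCeil_two_mul_logb_div_logb_eq_clog (q r : ℕ) :
    ⌈2 * logb 2 r / logb 2 q⌉₊ = Nat.clog q (r ^ 2) := by
  rw [← natCeil_logb_natCast]
  congr 1
  simp only [logb, Nat.cast_pow, log_pow]
  field_simp
  push_cast
  ring

-- `q ^ (k - 1) < r ^ 2` gives `(k - 1) log q < 2 log r`, so that the factor `log q` of the bound
-- on `n` cancels.
theorem clog_sq_succ_mul_le {q r n : ℕ} (hq : 2 ≤ q) (hr : 2 ≤ r)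
    (hn : (n : ℝ) ≤ 1 + r * logb 2 q / 2) :
    ((Nat.clog q (r ^ 2) + 1) * n : ℝ) ≤ (r + 2) * logb 2 r + r * logb 2 q + 2 := by
  set k := Nat.clog q (r ^ 2)
  have hr2 : 1 < r ^ 2 := Nat.one_lt_pow two_ne_zero hr
  have hk : 1 ≤ k := Nat.clog_pos (by omega) hr2
  have hL : 1 ≤ logb 2 q := by
    rw [le_logb_iff_rpow_le one_lt_two (by positivity)]
    simpa using (show (2 : ℝ) ≤ q by exact_mod_cast hq)
  have hkL : ((k - 1 : ℕ) : ℝ) * logb 2 q < 2 * logb 2 r := by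
    have hlt : ((q ^ (k - 1) : ℕ) : ℝ) < (r ^ 2 : ℕ) := by
      exact_mod_cast Nat.pow_pred_clog_lt_self (by omega) hr2
    simpa [logb_pow] using logb_lt_logb one_lt_two (by positivity) hlt
  rw [Nat.cast_sub hk, Nat.cast_one] at hkL
  have hk1 : (k - 1 : ℝ) ≤ (k - 1) * logb 2 q :=
    le_mul_of_one_le_right (by simp [hk]) hL
  calc ((k + 1) * n : ℝ) ≤ (k + 1) * (1 + r * logb 2 q / 2) :=
        mul_le_mul_of_nonneg_left hn (by positivity)
    _ = (k - 1) + 2 + r * ((k - 1) * logb 2 q) / 2 + r * logb 2 q := by ring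
    _ ≤ (r + 2) * logb 2 r + r * logb 2 q + 2 := by
        nlinarith [mul_le_mul_of_nonneg_left hkL.le (Nat.cast_nonneg r : (0 : ℝ) ≤ r)]

theorem two_mul_add_logb_two_le_mul_sq {q r : ℕ} (hq : 2 ≤ q) (hr : 3 ≤ r)
    (hqr : 16 ≤ q ∨ 16 ≤ r) :
    2 * ((r + 2) * logb 2 r + r * logb 2 q + 2) ≤ (q * r ^ 2 : ℝ) := by
  have hqR : (2 : ℝ) ≤ q := by exact_mod_cast hq
  have hrR : (3 : ℝ) ≤ r := by exact_mod_cast hr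
  have hR0 : 0 ≤ logb 2 (r : ℝ) := logb_nonneg one_lt_two (by linarith)
  have hL0 : 0 ≤ logb 2 (q : ℝ) := logb_nonneg one_lt_two (by linarith)
  rcases hqr with hq16 | hr16
  · have hq16R : (16 : ℝ) ≤ q := by exact_mod_cast hq16
    nlinarith [logb_two_natCast_le_self r, four_mul_logb_two_natCast_le hq16,
      mul_le_mul_of_nonneg_right hq16R (by nlinarith : (0 : ℝ) ≤ r * (2 * r - 1))]
  · have hr16R : (16 : ℝ) ≤ r := by exact_mod_cast hr16
    nlinarith [logb_two_natCast_le_self q, four_mul_logb_two_natCast_le hr16,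
      mul_nonneg (by positivity : (0 : ℝ) ≤ q * r) (by linarith : (0 : ℝ) ≤ r - 16)]

theorem stmt_2_general (θ : ℝ) (hθ1 : θ < 1 / 2) :
    ∃ C : ℝ, 0 < C ∧
      ∀ (F : Type) [Field F] [Fintype F] (q r : ℕ),
        q = Fintype.card F → 3 ≤ r → C ≤ (q : ℝ) ^ r →
          ∀ n : ℕ, 0 < n → (n : ℝ) ≤ 1 + θ * r * Real.logb 2 q →
            n ≤ Nat.card {p : Polynomial F // p.Monic ∧ Irreducible p ∧
                  p.natDegree = ⌈2 * Real.logb 2 r / Real.logb 2 q⌉₊ + 1} := by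
  refine ⟨16 ^ 16, by norm_num, ?_⟩
  intro F _ _ q r hq hr hC n _ hn
  rw [natCeil_two_mul_logb_div_logb_eq_clog]
  set M := Nat.clog q (r ^ 2) + 1
  have hq2 : 2 ≤ q := hq ▸ Fintype.one_lt_card
  have hqr : 15 < q ∨ 15 < r := by
    refine Nat.lt_or_lt_of_pow_self_lt_pow ?_
    exact_mod_cast (by norm_num : (15 : ℝ) ^ 15 < 16 ^ 16).trans_le hC
  have hn' : (n : ℝ) ≤ 1 + r * logb 2 q / 2 := by
    have hrL : 0 ≤ r * logb 2 q :=
      mul_nonneg r.cast_nonneg (logb_nonneg one_lt_two (by exact_mod_cast (by omega : 1 ≤ q)))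
    nlinarith
  have hqM : q * r ^ 2 ≤ q ^ M :=
    (Nat.mul_le_mul_left q (Nat.le_pow_clog hq2 _)).trans_eq (pow_succ' q _).symm
  have hMn : 2 * (M * n) ≤ q * r ^ 2 := by
    have := (mul_le_mul_of_nonneg_left (clog_sq_succ_mul_le hq2 (by omega) hn') two_pos.le).trans
      (two_mul_add_logb_two_le_mul_sq hq2 hr hqr)
    exact_mod_cast this
  have hhalf : 4 * q ^ (M / 2) ≤ q ^ M := Nat.four_mul_pow_div_two_le (by nlinarith)
  have hcount := FiniteField.pow_le_mul_card_monic_irreducible_add F (M := M) (Nat.succ_ne_zero _)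
  rw [Nat.card_eq_fintype_card, ← hq] at hcount
  exact Nat.le_of_mul_le_mul_left (c := M) (by linarith) (Nat.succ_pos _)

/-- Lemma `pre1`: for `0 < θ < 1/2` there is a constant `C > 0` such that for every
finite field with `q` elements and every `r ≥ 3` with `q^r ≥ C`, setting
`M = ⌈2 log₂ r / log₂ q⌉ + 1`, every positive integer `n ≤ 1 + θ r log₂ q` satisfies
`n ≤ I_M`, the number of monic irreducible polynomials of degree `M`. -/
theorem stmt_2 (θ : ℝ) (hθ0 : 0 < θ) (hθ1 : θ < 1 / 2) :
    ∃ C : ℝ, 0 < C ∧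
      ∀ (F : Type) [Field F] [Fintype F] (q r : ℕ),
        q = Fintype.card F → 3 ≤ r → C ≤ (q : ℝ) ^ r →
          ∀ n : ℕ, 0 < n → (n : ℝ) ≤ 1 + θ * r * Real.logb 2 q →
            n ≤ Nat.card {p : Polynomial F // p.Monic ∧ Irreducible p ∧
                  p.natDegree = ⌈2 * Real.logb 2 r / Real.logb 2 q⌉₊ + 1} :=
  stmt_2_general θ hθ1
end

section
/- Let q ≥ 2 and r ≥ 2 be integers and set M = ⌈2·log₂ r / log₂ q⌉ + 1. Then, as real numbers, q^M − 2·q^{M/2} ≥ q·r·(r − 2). -/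
/-- For integers `q ≥ 2`, `r ≥ 2` and `M = ⌈2 log₂ r / log₂ q⌉ + 1`, one has
`q^M - 2 q^(M/2) ≥ q r (r - 2)` as real numbers. -/
theorem stmt_3 (q r : ℕ) (hq : 2 ≤ q) (hr : 2 ≤ r)
    (M : ℕ) (hM : M = ⌈2 * Real.logb 2 r / Real.logb 2 q⌉₊ + 1) :
    (q : ℝ) * r * ((r : ℝ) - 2) ≤ (q : ℝ) ^ M - 2 * (q : ℝ) ^ ((M : ℝ) / 2) := by
  have hq1 : (1:ℝ) < (q:ℝ) := by exact_mod_cast hq.trans_lt' one_lt_two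
  have hr1 : (1:ℝ) < (r:ℝ) := by exact_mod_cast hr.trans_lt' one_lt_two
  have hq0 : (0:ℝ) < (q:ℝ) := by linarith
  have hr0 : (0:ℝ) < (r:ℝ) := by linarith
  have hlogq : Real.log (q:ℝ) ≠ 0 := ne_of_gt (Real.log_pos hq1)
  have hlog2 : Real.log 2 ≠ 0 := ne_of_gt (Real.log_pos one_lt_two)
  set y : ℝ := Real.logb q ((r:ℝ)^2) with hy
  have hx : 2 * Real.logb 2 r / Real.logb 2 q = y := by
    rw [hy, Real.logb, Real.logb, Real.logb, Real.log_pow]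
    push_cast
    field_simp
  have hqy : (q:ℝ) ^ y = (r:ℝ)^2 :=
    Real.rpow_logb hq0 (ne_of_gt hq1) (by positivity)
  have hy0 : 0 ≤ y := by
    rw [hy]
    apply Real.logb_nonneg hq1
    nlinarith
  rw [hx] at hM
  have hM1 : y + 1 ≤ (M:ℝ) := by
    have := Nat.le_ceil y
    rw [hM]; push_cast; linarith
  have hM2 : (M:ℝ) ≤ y + 2 := by
    have := Nat.ceil_lt_add_one hy0
    rw [hM]; push_cast; linarith
  have h1 : (q:ℝ) * (r:ℝ)^2 ≤ (q:ℝ) ^ M := by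
    have : (q:ℝ) ^ (y+1) ≤ (q:ℝ) ^ (M:ℝ) :=
      Real.rpow_le_rpow_of_exponent_le hq1.le hM1
    rw [Real.rpow_add hq0, hqy, Real.rpow_one, Real.rpow_natCast] at this
    linarith
  have h2 : (q:ℝ) ^ ((M:ℝ)/2) ≤ (q:ℝ) * (r:ℝ) := by
    have h3 : (q:ℝ) ^ ((M:ℝ)/2) ≤ (q:ℝ) ^ (y/2 + 1) :=
      Real.rpow_le_rpow_of_exponent_le hq1.le (by linarith)
    have h4 : (q:ℝ) ^ (y/2 + 1) = (r:ℝ) * (q:ℝ) := by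
      rw [Real.rpow_add hq0, Real.rpow_one]
      congr 1
      have : y / 2 = y * (1/2) := by ring
      rw [this, Real.rpow_mul hq0.le, hqy]
      rw [← Real.rpow_natCast (r:ℝ) 2, ← Real.rpow_mul hr0.le]
      norm_num
    nlinarith [h3, h4]
  nlinarith [h1, h2, hq0, hr0]
end

section
/- Let Q(X) = X⁶ + 2X⁵ + 3X⁴ + 3X³ + X² + 1 in (ℤ/7ℤ)[X]. Then in (ℤ/7ℤ)[X]: (X² + 4X + 6) divides Q − (3 + 2X)²; (X² + 3X + 6) divides Q − (3 + X)²; (X² + 3X + 1) divides Q − (2 + 5X)²; (X² + 6X + 4) divides Q − 1; (X² + 6X + 3) divides Q − (2 + 2X)²; (X² + 2X + 2) divides Q − (3 + X)²; and (X² + 4) divides Q − (2 + 5X)². -/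
open Polynomial

/-- The seven congruences `Q(x) ≡ (square) mod (quadratic)` over `ℤ/7ℤ` from the proof
that `A(7) ≥ 9/10`. -/
theorem stmt_7 (Q : Polynomial (ZMod 7))
    (hQ : Q = X ^ 6 + 2 * X ^ 5 + 3 * X ^ 4 + 3 * X ^ 3 + X ^ 2 + 1) :
    (X ^ 2 + 4 * X + 6) ∣ Q - (3 + 2 * X) ^ 2 ∧
    (X ^ 2 + 3 * X + 6) ∣ Q - (3 + X) ^ 2 ∧
    (X ^ 2 + 3 * X + 1) ∣ Q - (2 + 5 * X) ^ 2 ∧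
    (X ^ 2 + 6 * X + 4) ∣ Q - 1 ∧
    (X ^ 2 + 6 * X + 3) ∣ Q - (2 + 2 * X) ^ 2 ∧
    (X ^ 2 + 2 * X + 2) ∣ Q - (3 + X) ^ 2 ∧
    (X ^ 2 + 4) ∣ Q - (2 + 5 * X) ^ 2 := by
  subst hQ
  refine ⟨⟨X ^ 4 + 5 * X ^ 3 + 5 * X ^ 2 + 2 * X + 1, ?_⟩,
    ⟨X ^ 4 + 6 * X ^ 3 + 2 * X + 1, ?_⟩,
    ⟨X ^ 4 + 6 * X ^ 3 + 5 * X ^ 2 + 3 * X + 4, ?_⟩,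
    ⟨X ^ 4 + 3 * X ^ 3 + 2 * X ^ 2, ?_⟩,
    ⟨X ^ 4 + 3 * X ^ 3 + 3 * X ^ 2 + 4 * X + 6, ?_⟩,
    ⟨X ^ 4 + X ^ 2 + X + 3, ?_⟩,
    ⟨X ^ 4 + 2 * X ^ 3 + 6 * X ^ 2 + 2 * X + 1, ?_⟩⟩ <;>
  · ring_nf
    try reduce_mod_char
    try ring_nf
    try reduce_mod_char
end

section
/- In (ℤ/7ℤ)[X], each of the polynomials X² + 4X + 6, X² + 3X + 6, X² + 3X + 1, X² + 6X + 4, X² + 6X + 3, X² + 2X + 2, and X² + 4 is irreducible. Moreover, setting P(X) = X·(X+1)·(X+2)·(X²+4X+6)·(X²+3X+6)·(X²+3X+1)·(X²+6X+4)·(X²+6X+3)·(X²+2X+2)·(X²+4), for each α ∈ {1, 2, 3, 4} ⊆ ℤ/7ℤ there exists β ∈ ℤ/7ℤ with β ≠ 0 and β² = P(α). -/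
open Polynomial

lemma irredAux (a b : ZMod 7) (h : ∀ x : ZMod 7, x ^ 2 + a * x + b ≠ 0) :
    Irreducible (X ^ 2 + C a * X + C b : Polynomial (ZMod 7)) := by
  haveI : Fact (Nat.Prime 7) := ⟨by norm_num⟩
  have hd : (X ^ 2 + C a * X + C b : Polynomial (ZMod 7)).natDegree = 2 := by
    compute_degree!
  refine (irreducible_iff_roots_eq_zero_of_degree_le_three (p := (X ^ 2 + C a * X + C b : Polynomial (ZMod 7))) hd.ge (hd.le.trans (by norm_num))).mpr ?_
  refine Multiset.eq_zero_iff_forall_notMem.mpr fun x hx => ?_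
  have h0 : (X ^ 2 + C a * X + C b : Polynomial (ZMod 7)) ≠ 0 := by
    intro h0; simp [h0] at hd
  have := isRoot_of_mem_roots hx
  simp [IsRoot, eval_add, eval_pow, eval_mul] at this
  exact h x this

/-- The quadratics in the ramification set of `K/k` in the proof that `A(7) ≥ 9/10` are
irreducible over `ℤ/7ℤ`, and `P(α)` is a nonzero square for `α ∈ {1, 2, 3, 4}`. -/
theorem stmt_8 (P : Polynomial (ZMod 7))
    (hP : P = X * (X + 1) * (X + 2) * (X ^ 2 + 4 * X + 6) * (X ^ 2 + 3 * X + 6) *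
      (X ^ 2 + 3 * X + 1) * (X ^ 2 + 6 * X + 4) * (X ^ 2 + 6 * X + 3) *
      (X ^ 2 + 2 * X + 2) * (X ^ 2 + 4)) :
    (Irreducible (X ^ 2 + 4 * X + 6 : Polynomial (ZMod 7)) ∧
     Irreducible (X ^ 2 + 3 * X + 6 : Polynomial (ZMod 7)) ∧
     Irreducible (X ^ 2 + 3 * X + 1 : Polynomial (ZMod 7)) ∧
     Irreducible (X ^ 2 + 6 * X + 4 : Polynomial (ZMod 7)) ∧
     Irreducible (X ^ 2 + 6 * X + 3 : Polynomial (ZMod 7)) ∧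
     Irreducible (X ^ 2 + 2 * X + 2 : Polynomial (ZMod 7)) ∧
     Irreducible (X ^ 2 + 4 : Polynomial (ZMod 7))) ∧
    ∀ α ∈ ({1, 2, 3, 4} : Set (ZMod 7)), ∃ β : ZMod 7, β ≠ 0 ∧ β ^ 2 = P.eval α := by
  constructor
  · refine ⟨?_, ?_, ?_, ?_, ?_, ?_, ?_⟩
    · have := irredAux 4 6 (by decide); simpa [map_ofNat] using this
    · have := irredAux 3 6 (by decide); simpa [map_ofNat] using this
    · have := irredAux 3 1 (by decide); simpa [map_ofNat] using this
    · have := irredAux 6 4 (by decide); simpa [map_ofNat] using this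
    · have := irredAux 6 3 (by decide); simpa [map_ofNat] using this
    · have := irredAux 2 2 (by decide); simpa [map_ofNat] using this
    · have := irredAux 0 4 (by decide); simpa [map_ofNat] using this
  · subst hP
    rintro α (rfl | rfl | rfl | rfl) <;>
      · simp only [eval_mul, eval_add, eval_pow, eval_X, eval_ofNat, eval_one]
        decide
end
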